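/- In the topological amalgamated limit setting, if F ⊆ I is closed and y ∈ Y_F, then there exists x ∈ X_ℓ with x(j) = y(j) for all j ∈ F. In particular, for every i ∈ I and every x_i ∈ X_i there is x ∈ X_ℓ with x(i) = x_i; hence each projection p^ℓ_i : X_ℓ → X_i is surjective and X_ℓ is nonempty. -/

import Mathlib

/-- A distributive almost-lattice: a partial order where any two elements have a meet,
any two elements with a common upper bound have a join, among any three elements two have
a common upper bound, the distributive laws hold whenever both sides exist, and
conditions (v) and (vi) hold. -/
structure DistribAlmostLattice (I : Type*) [PartialOrder I] where
  meet : I → I → I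
  join : I → I → I
  /-- (i): `meet i j` is the greatest lower bound of `i` and `j` -/
  meet_isGLB : ∀ i j : I, IsGLB {i, j} (meet i j)
  /-- (ii): if `i`, `j` have a common upper bound, `join i j` is their least upper bound -/
  join_isLUB : ∀ i j : I, (∃ u, i ≤ u ∧ j ≤ u) → IsLUB {i, j} (join i j)
  /-- (iii): among any three elements, two have a common upper bound -/
  two_of_three : ∀ i j k : I,
    (∃ u, i ≤ u ∧ j ≤ u) ∨ (∃ u, i ≤ u ∧ k ≤ u) ∨ (∃ u, j ≤ u ∧ k ≤ u)
  /-- (iv): distributivity of meet over join (whenever both sides exist) -/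
  distrib_meet_join : ∀ i j k : I, (∃ u, j ≤ u ∧ k ≤ u) →
    meet i (join j k) = join (meet i j) (meet i k)
  /-- (iv): distributivity of join over meet (whenever both sides exist) -/
  distrib_join_meet : ∀ i j k : I, (∃ u, i ≤ u ∧ j ≤ u) → (∃ u, i ≤ u ∧ k ≤ u) →
    join i (meet j k) = meet (join i j) (join i k)
  /-- (v) -/
  cond_v : ∀ i j j' : I, ¬(∃ u, i ≤ u ∧ j ≤ u) →
    ((¬(∃ u, i ≤ u ∧ j' ≤ u) ∧ ¬(∃ u, i ≤ u ∧ meet j j' ≤ u)) ∨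
      join i j' = join i (meet j j'))
  /-- (vi) -/
  cond_vi : ∀ i j j' : I, ¬(∃ u, j ≤ u ∧ j' ≤ u) →
    join (meet i j) (meet i j') = i

namespace DistribAlmostLattice

variable {I : Type*} [PartialOrder I] (L : DistribAlmostLattice I)

theorem meet_le_left (i j : I) : L.meet i j ≤ i :=
  (L.meet_isGLB i j).1 (Set.mem_insert _ _)

theorem meet_le_right (i j : I) : L.meet i j ≤ j :=
  (L.meet_isGLB i j).1 (Set.mem_insert_of_mem _ rfl)

theorem le_join_left (i j : I) (h : ∃ u, i ≤ u ∧ j ≤ u) : i ≤ L.join i j :=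
  (L.join_isLUB i j h).1 (Set.mem_insert _ _)

theorem le_join_right (i j : I) (h : ∃ u, i ≤ u ∧ j ≤ u) : j ≤ L.join i j :=
  (L.join_isLUB i j h).1 (Set.mem_insert_of_mem _ rfl)

end DistribAlmostLattice

/-- A subset `F` of a distributive almost-lattice is closed if it is closed under meets
and under joins whenever they exist. -/
def IsClosedSubset {I : Type*} [PartialOrder I] (L : DistribAlmostLattice I)
    (F : Set I) : Prop :=
  ∀ i ∈ F, ∀ j ∈ F, L.meet i j ∈ F ∧ ((∃ u, i ≤ u ∧ j ≤ u) → L.join i j ∈ F)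

section TopAmal

variable {I : Type*} [PartialOrder I]
variable (X : I → Type*) (p : ∀ i j : I, i ≤ j → X j → X i)

/-- Membership in the topological amalgamated limit `X_ℓ ⊆ Π_{i∈I} X_i`. -/
def InXl (x : ∀ i, X i) : Prop :=
  ∀ i j : I, ∀ hij : i ≤ j, p i j hij (x j) = x i

/-- Membership in `Y_F`: threads indexed by a subset `F ⊆ I`. -/
def InY (F : Set I) (y : ∀ i, X i) : Prop :=
  ∀ k ∈ F, ∀ j ∈ F, ∀ h : k ≤ j, p k j h (y j) = y k

end TopAmal

/-!
By Tychonoff, `Π i, X i` is compact, so it suffices to extend `y` to a thread on every finite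
set `C ⊆ I` closed under existing joins (every finite set lies in one: the joins of its subsets).
Starting from `y` on `C ∩ F`, the values on `C` are fixed top-down: at a maximal index `t` not yet
treated, choose a point compatible, at every common lower bound, with the values already fixed.
The treated indices stay closed under joins, so their maximal elements have pairwise no upper
bound; by (iii) there are at most two of them, and compatibility with these suffices. For one
maximal index `d` this is surjectivity of `p` onto `t ∧ d`; for two, `d` and `d'`, axiom (vi)
gives `t = (t ∧ d) ∨ (t ∧ d')` and correctness glues the two restrictions.
-/

namespace DistribAlmostLattice

variable {I : Type*} [PartialOrder I] (L : DistribAlmostLattice I)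

theorem le_meet {i j k : I} (hi : k ≤ i) (hj : k ≤ j) : k ≤ L.meet i j :=
  (L.meet_isGLB i j).2 (by simp [lowerBounds_insert, hi, hj])

theorem meet_self (i : I) : L.meet i i = i :=
  (L.meet_isGLB i i).unique (by simp)

theorem join_self (i : I) : L.join i i = i :=
  (L.join_isLUB i i ⟨i, le_rfl, le_rfl⟩).unique (by simp)

theorem isClosedSubset_singleton (i : I) : IsClosedSubset L {i} := by
  intro a ha b hb
  rw [Set.mem_singleton_iff] at ha hb
  rw [ha, hb]
  exact ⟨L.meet_self i, fun _ => L.join_self i⟩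

theorem isLUB_union {s t : Set I} {a b : I} (ha : IsLUB s a) (hb : IsLUB t b)
    (hab : ∃ u, a ≤ u ∧ b ≤ u) : IsLUB (s ∪ t) (L.join a b) := by
  have h := L.join_isLUB a b hab
  rwa [IsLUB, upperBounds_insert, upperBounds_singleton, ← ha.upperBounds_eq,
    ← hb.upperBounds_eq, ← upperBounds_union] at h

def JoinClosed (D : Set I) : Prop :=
  ∀ i ∈ D, ∀ j ∈ D, (∃ u, i ≤ u ∧ j ≤ u) → L.join i j ∈ D

theorem exists_finset_joinClosed_superset (T : Finset I) :
    ∃ C : Finset I, T ⊆ C ∧ L.JoinClosed ↑C := by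
  let C : Set I := {x | ∃ s ⊆ (T : Set I), IsLUB s x}
  have hC : C.Finite := by
    have hsub : C ⊆ ⋃ s ∈ 𝒫 (T : Set I), {x | IsLUB s x} :=
      fun x ⟨s, hs, hx⟩ => Set.mem_biUnion hs hx
    refine (T.finite_toSet.powerset.biUnion fun s _ => ?_).subset hsub
    exact Set.Subsingleton.finite fun x hx y hy => hx.unique hy
  refine ⟨hC.toFinset, fun t ht => ?_, ?_⟩
  · exact hC.mem_toFinset.2 ⟨{t}, by simpa using ht, isLUB_singleton⟩
  · rw [hC.coe_toFinset]
    rintro a ⟨s, hs, ha⟩ b ⟨s', hs', hb⟩ hab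
    exact ⟨s ∪ s', Set.union_subset hs hs', L.isLUB_union ha hb hab⟩

variable {L}

theorem JoinClosed.inter {A B : Set I} (hA : L.JoinClosed A) (hB : L.JoinClosed B) :
    L.JoinClosed (A ∩ B) :=
  fun i hi j hj h => ⟨hA i hi.1 j hj.1 h, hB i hi.2 j hj.2 h⟩

theorem JoinClosed.eq_of_maximal {D : Set I} (hD : L.JoinClosed D) {m m' : I}
    (hm : Maximal (· ∈ D) m) (hm' : Maximal (· ∈ D) m') (h : ∃ u, m ≤ u ∧ m' ≤ u) :
    m = m' :=
  have hj := hD m hm.prop m' hm'.prop h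
  (hm.eq_of_le hj (L.le_join_left m m' h)).trans
    (hm'.eq_of_le hj (L.le_join_right m m' h)).symm

theorem JoinClosed.le_or_le_of_maximal {D : Finset I} (hD : L.JoinClosed ↑D) {m m' : I}
    (hm : Maximal (· ∈ D) m) (hm' : Maximal (· ∈ D) m') (hne : m ≠ m') {e : I}
    (he : e ∈ D) :
    e ≤ m ∨ e ≤ m' := by
  obtain ⟨m'', hem'', hm''⟩ := D.exists_le_maximal he
  rcases L.two_of_three m m' m'' with h | h | h
  · exact absurd (hD.eq_of_maximal hm hm' h) hne
  · exact .inl (hem''.trans_eq (hD.eq_of_maximal hm hm'' h).symm)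
  · exact .inr (hem''.trans_eq (hD.eq_of_maximal hm' hm'' h).symm)

theorem JoinClosed.insert_of_maximal [DecidableEq I] {C D : Finset I} (hC : L.JoinClosed ↑C)
    (hDC : D ⊆ C) (hD : L.JoinClosed ↑D) {t : I} (ht : Maximal (· ∈ C \ D) t) :
    L.JoinClosed ↑(insert t D) := by
  intro a ha b hb hab
  have hsub : insert t D ⊆ C := Finset.insert_subset (Finset.mem_sdiff.1 ht.prop).1 hDC
  have hjC : L.join a b ∈ C := hC a (hsub ha) b (hsub hb) hab
  simp only [Finset.coe_insert, Set.mem_insert_iff, Finset.mem_coe] at ha hb ⊢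
  by_cases hjD : L.join a b ∈ D
  · exact .inr hjD
  have htj : t ≤ L.join a b := by
    rcases ha with rfl | ha
    · exact L.le_join_left _ _ hab
    rcases hb with rfl | hb
    · exact L.le_join_right _ _ hab
    exact absurd (hD a ha b hb hab) hjD
  exact .inl (ht.eq_of_le (Finset.mem_sdiff.2 ⟨hjC, hjD⟩) htj).symm

end DistribAlmostLattice

namespace AmalgamatedLimit

open DistribAlmostLattice

variable {I : Type*} [PartialOrder I] {X : I → Type*} (p : ∀ i j : I, i ≤ j → X j → X i)

def Compatible {a b : I} (xa : X a) (xb : X b) : Prop :=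
  ∀ k (ha : k ≤ a) (hb : k ≤ b), p k a ha xa = p k b hb xb

def CompatibleOn (D : Set I) (v : ∀ i, X i) : Prop :=
  ∀ a ∈ D, ∀ b ∈ D, Compatible p (v a) (v b)

def IsCorrect (L : DistribAlmostLattice I) : Prop :=
  ∀ i j : I, ∀ hub : ∃ u, i ≤ u ∧ j ≤ u, ∀ xi : X i, ∀ xj : X j,
    p (L.meet i j) i (L.meet_le_left i j) xi = p (L.meet i j) j (L.meet_le_right i j) xj →
    ∃ z : X (L.join i j),
      p i (L.join i j) (L.le_join_left i j hub) z = xi ∧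
      p j (L.join i j) (L.le_join_right i j hub) z = xj

variable {p}

theorem compatible_refl {a : I} (xa : X a) : Compatible p xa xa :=
  fun _ _ _ => rfl

theorem Compatible.symm {a b : I} {xa : X a} {xb : X b} (h : Compatible p xa xb) :
    Compatible p xb xa :=
  fun k hb ha => (h k ha hb).symm

theorem Compatible.trans_of_le {a b c : I} {xa : X a} {xb : X b} {xc : X c}
    (h : Compatible p xa xb) (h' : Compatible p xb xc) (hcb : c ≤ b) : Compatible p xa xc :=
  fun k ha hc => (h k ha (hc.trans hcb)).trans (h' k _ hc)

theorem compatible_of_eq_at_meet (L : DistribAlmostLattice I)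
    (hcomp : ∀ i j k : I, ∀ hij : i ≤ j, ∀ hjk : j ≤ k, ∀ x : X k,
      p i j hij (p j k hjk x) = p i k (hij.trans hjk) x)
    {a b : I} {xa : X a} {xb : X b}
    (h : p (L.meet a b) a (L.meet_le_left a b) xa = p (L.meet a b) b (L.meet_le_right a b) xb) :
    Compatible p xa xb := by
  intro k ha hb
  have hk := L.le_meet ha hb
  rw [← hcomp k _ a hk (L.meet_le_left a b), h, hcomp]

theorem CompatibleOn.mono {D E : Set I} {v : ∀ i, X i} (hv : CompatibleOn p D v) (hED : E ⊆ D) :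
    CompatibleOn p E v :=
  fun a ha b hb => hv a (hED ha) b (hED hb)

theorem CompatibleOn.inY (hid : ∀ i : I, ∀ hii : i ≤ i, ∀ x : X i, p i i hii x = x)
    {D : Set I} {v : ∀ i, X i} (hv : CompatibleOn p D v) : InY X p D v :=
  fun k hk j hj h => by rw [hv j hj k hk k h le_rfl, hid]

theorem _root_.InY.mono {D E : Set I} {v : ∀ i, X i} (hv : InY X p D v) (hED : E ⊆ D) :
    InY X p E v :=
  fun k hk j hj h => hv k (hED hk) j (hED hj) h

theorem _root_.InY.compatibleOn (L : DistribAlmostLattice I)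
    (hcomp : ∀ i j k : I, ∀ hij : i ≤ j, ∀ hjk : j ≤ k, ∀ x : X k,
      p i j hij (p j k hjk x) = p i k (hij.trans hjk) x)
    {F : Set I} (hF : ∀ i ∈ F, ∀ j ∈ F, L.meet i j ∈ F) {y : ∀ i, X i}
    (hy : InY X p F y) :
    CompatibleOn p F y := fun a ha b hb =>
  have hab := hF a ha b hb
  compatible_of_eq_at_meet L hcomp (by rw [hy _ hab a ha, hy _ hab b hb])

theorem CompatibleOn.insert_update [DecidableEq I] {D : Set I} {v : ∀ i, X i}
    (hv : CompatibleOn p D v) {t : I} (ht : t ∉ D) {x : X t}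
    (hx : ∀ d ∈ D, Compatible p x (v d)) :
    CompatibleOn p (insert t D) (Function.update v t x) := by
  have hv' : ∀ d ∈ D, Function.update v t x d = v d := fun d hd =>
    Function.update_of_ne (ne_of_mem_of_not_mem hd ht) _ _
  rintro a (rfl | ha) b (rfl | hb)
  · rw [Function.update_self]; exact compatible_refl x
  · rw [Function.update_self, hv' b hb]; exact hx b hb
  · rw [Function.update_self, hv' a ha]; exact (hx a ha).symm
  · rw [hv' a ha, hv' b hb]; exact hv a ha b hb

theorem exists_compatible (L : DistribAlmostLattice I)
    (hcomp : ∀ i j k : I, ∀ hij : i ≤ j, ∀ hjk : j ≤ k, ∀ x : X k,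
      p i j hij (p j k hjk x) = p i k (hij.trans hjk) x)
    (hsurj : ∀ i j : I, ∀ hij : i ≤ j, Function.Surjective (p i j hij))
    (t : I) {d : I} (xd : X d) : ∃ x : X t, Compatible p x xd := by
  obtain ⟨x, hx⟩ := hsurj _ t (L.meet_le_left t d) (p _ d (L.meet_le_right t d) xd)
  exact ⟨x, compatible_of_eq_at_meet L hcomp hx⟩

theorem exists_compatible_of_not_bounded (L : DistribAlmostLattice I)
    (hcomp : ∀ i j k : I, ∀ hij : i ≤ j, ∀ hjk : j ≤ k, ∀ x : X k,
      p i j hij (p j k hjk x) = p i k (hij.trans hjk) x)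
    (hcor : IsCorrect p L) (t : I) {d d' : I} (hdd' : ¬∃ u, d ≤ u ∧ d' ≤ u)
    {xd : X d} {xd' : X d'} (h : Compatible p xd xd') :
    ∃ x : X t, Compatible p x xd ∧ Compatible p x xd' := by
  have hab : ∃ u, L.meet t d ≤ u ∧ L.meet t d' ≤ u :=
    ⟨t, L.meet_le_left t d, L.meet_le_left t d'⟩
  obtain ⟨z, hzd, hzd'⟩ := hcor _ _ hab (p _ d (L.meet_le_right t d) xd)
    (p _ d' (L.meet_le_right t d') xd') (by rw [hcomp, hcomp]; exact h _ _ _)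
  have ht : L.join (L.meet t d) (L.meet t d') = t := L.cond_vi t d d' hdd'
  refine ⟨p t _ ht.ge z, compatible_of_eq_at_meet L hcomp ?_,
    compatible_of_eq_at_meet L hcomp ?_⟩
  · rw [hcomp]; exact hzd
  · rw [hcomp]; exact hzd'

theorem exists_compatible_with_family (L : DistribAlmostLattice I) [∀ i, Nonempty (X i)]
    (hcomp : ∀ i j k : I, ∀ hij : i ≤ j, ∀ hjk : j ≤ k, ∀ x : X k,
      p i j hij (p j k hjk x) = p i k (hij.trans hjk) x)
    (hsurj : ∀ i j : I, ∀ hij : i ≤ j, Function.Surjective (p i j hij))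
    (hcor : IsCorrect p L) {D : Finset I} (hD : L.JoinClosed ↑D) {v : ∀ i, X i}
    (hv : CompatibleOn p ↑D v) (t : I) : ∃ x : X t, ∀ d ∈ D, Compatible p x (v d) := by
  rcases D.eq_empty_or_nonempty with rfl | ⟨e, he⟩
  · exact ⟨Classical.arbitrary _, by simp⟩
  obtain ⟨m, -, hm⟩ := D.exists_le_maximal he
  by_cases hbelow : ∀ d ∈ D, d ≤ m
  · obtain ⟨x, hx⟩ := exists_compatible L hcomp hsurj t (v m)
    exact ⟨x, fun d hd => hx.trans_of_le (hv m hm.prop d hd) (hbelow d hd)⟩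
  push Not at hbelow
  obtain ⟨e', he', hnot⟩ := hbelow
  obtain ⟨m', hem', hm'⟩ := D.exists_le_maximal he'
  have hne : m ≠ m' := by rintro rfl; exact hnot hem'
  obtain ⟨x, hx, hx'⟩ := exists_compatible_of_not_bounded L hcomp hcor t
    (fun h => hne (hD.eq_of_maximal hm hm' h)) (hv m hm.prop m' hm'.prop)
  refine ⟨x, fun d hd => ?_⟩
  rcases hD.le_or_le_of_maximal hm hm' hne hd with hdm | hdm'
  · exact hx.trans_of_le (hv m hm.prop d hd) hdm
  · exact hx'.trans_of_le (hv m' hm'.prop d hd) hdm'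

theorem exists_compatibleOn_extending (L : DistribAlmostLattice I) [DecidableEq I]
    [∀ i, Nonempty (X i)]
    (hcomp : ∀ i j k : I, ∀ hij : i ≤ j, ∀ hjk : j ≤ k, ∀ x : X k,
      p i j hij (p j k hjk x) = p i k (hij.trans hjk) x)
    (hsurj : ∀ i j : I, ∀ hij : i ≤ j, Function.Surjective (p i j hij))
    (hcor : IsCorrect p L) {C : Finset I} (hC : L.JoinClosed ↑C) (D : Finset I) (hDC : D ⊆ C)
    (hD : L.JoinClosed ↑D) (v : ∀ i, X i) (hv : CompatibleOn p ↑D v) :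
    ∃ w : ∀ i, X i, CompatibleOn p ↑C w ∧ ∀ d ∈ D, w d = v d := by
  by_cases hCD : C ⊆ D
  · exact ⟨v, hv.mono hCD, fun _ _ => rfl⟩
  obtain ⟨t, ht⟩ := (C \ D).exists_maximal (Finset.sdiff_nonempty.2 hCD)
  have htD : t ∉ D := (Finset.mem_sdiff.1 ht.prop).2
  obtain ⟨x, hx⟩ := exists_compatible_with_family L hcomp hsurj hcor hD hv t
  obtain ⟨w, hw, hwv⟩ := exists_compatibleOn_extending L hcomp hsurj hcor hC (insert t D)
    (Finset.insert_subset (Finset.mem_sdiff.1 ht.prop).1 hDC) (hC.insert_of_maximal hDC hD ht)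
    (Function.update v t x) (by rw [Finset.coe_insert]; exact hv.insert_update htD hx)
  refine ⟨w, hw, fun d hd => ?_⟩
  rw [hwv d (Finset.mem_insert_of_mem hd), Function.update_of_ne (ne_of_mem_of_not_mem hd htD)]
termination_by (C \ D).card
decreasing_by
  rw [Finset.sdiff_insert]
  exact Finset.card_erase_lt_of_mem ht.prop

theorem exists_inY_finset_extending (L : DistribAlmostLattice I) [∀ i, Nonempty (X i)]
    (hid : ∀ i : I, ∀ hii : i ≤ i, ∀ x : X i, p i i hii x = x)
    (hcomp : ∀ i j k : I, ∀ hij : i ≤ j, ∀ hjk : j ≤ k, ∀ x : X k,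
      p i j hij (p j k hjk x) = p i k (hij.trans hjk) x)
    (hsurj : ∀ i j : I, ∀ hij : i ≤ j, Function.Surjective (p i j hij))
    (hcor : IsCorrect p L) {F : Set I} (hF : IsClosedSubset L F) {y : ∀ i, X i}
    (hy : InY X p F y) {C : Finset I} (hC : L.JoinClosed ↑C) :
    ∃ w : ∀ i, X i, InY X p ↑C w ∧ ∀ j ∈ C, j ∈ F → w j = y j := by
  classical
  have hD : L.JoinClosed ↑(C.filter (· ∈ F)) := by
    rw [Finset.coe_filter]
    exact hC.inter fun i hi j hj => (hF i hi j hj).2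
  have hyD : CompatibleOn p ↑(C.filter (· ∈ F)) y :=
    (hy.compatibleOn L hcomp fun i hi j hj => (hF i hi j hj).1).mono
      fun j hj => (Finset.mem_filter.1 hj).2
  obtain ⟨w, hw, hwy⟩ := exists_compatibleOn_extending L hcomp hsurj hcor hC _
    (Finset.filter_subset _ C) hD y hyD
  exact ⟨w, hw.inY hid, fun j hjC hjF => hwy j (Finset.mem_filter.2 ⟨hjC, hjF⟩)⟩

variable [∀ i, TopologicalSpace (X i)]

theorem isClosed_setOf_inY [∀ i, T2Space (X i)]
    (hcont : ∀ i j : I, ∀ hij : i ≤ j, Continuous (p i j hij)) (T : Set I) :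
    IsClosed {x : ∀ i, X i | InY X p T x} := by
  simp only [InY, Set.ofPred_forall]
  exact isClosed_biInter fun k _ => isClosed_biInter fun j _ => isClosed_iInter fun h =>
    isClosed_eq ((hcont k j h).comp (continuous_apply j)) (continuous_apply k)

theorem exists_inXl_extending (L : DistribAlmostLattice I) [∀ i, Nonempty (X i)]
    [∀ i, CompactSpace (X i)] [∀ i, T2Space (X i)]
    (hcont : ∀ i j : I, ∀ hij : i ≤ j, Continuous (p i j hij))
    (hid : ∀ i : I, ∀ hii : i ≤ i, ∀ x : X i, p i i hii x = x)
    (hcomp : ∀ i j k : I, ∀ hij : i ≤ j, ∀ hjk : j ≤ k, ∀ x : X k,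
      p i j hij (p j k hjk x) = p i k (hij.trans hjk) x)
    (hsurj : ∀ i j : I, ∀ hij : i ≤ j, Function.Surjective (p i j hij))
    (hcor : IsCorrect p L) {F : Set I} (hF : IsClosedSubset L F) {y : ∀ i, X i}
    (hy : InY X p F y) : ∃ x : ∀ i, X i, InXl X p x ∧ ∀ j ∈ F, x j = y j := by
  classical
  let K : Finset I → Set (∀ i, X i) := fun T =>
    {x | InY X p ↑T x} ∩ ⋂ j ∈ T, ⋂ (_ : j ∈ F), {x | x j = y j}
  have hK_anti : Antitone K := fun T T' hTT' x ⟨hx, hxy⟩ =>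
    ⟨hx.mono (Finset.coe_subset.2 hTT'), by
      simp only [Set.mem_iInter] at hxy ⊢
      exact fun j hj => hxy j (hTT' hj)⟩
  have hK_closed (T : Finset I) : IsClosed (K T) :=
    (isClosed_setOf_inY hcont _).inter <| isClosed_biInter fun j _ =>
      isClosed_iInter fun _ => isClosed_eq (continuous_apply j) continuous_const
  have hK_nonempty (T : Finset I) : (K T).Nonempty := by
    obtain ⟨C, hTC, hC⟩ := L.exists_finset_joinClosed_superset T
    obtain ⟨w, hw, hwy⟩ := exists_inY_finset_extending L hid hcomp hsurj hcor hF hy hC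
    refine ⟨w, hw.mono (Finset.coe_subset.2 hTC), ?_⟩
    simp only [Set.mem_iInter]
    exact fun j hj => hwy j (hTC hj)
  obtain ⟨x, hx⟩ := IsCompact.nonempty_iInter_of_directed_nonempty_isCompact_isClosed K
    hK_anti.directed_ge hK_nonempty (fun T => (hK_closed T).isCompact) hK_closed
  simp only [Set.mem_iInter] at hx
  refine ⟨x, fun i j h => (hx {i, j}).1 i (by simp) j (by simp) h, fun j hj => ?_⟩
  simpa [hj] using (hx {j}).2

end AmalgamatedLimit

open AmalgamatedLimit in
theorem thread_extends_to_Xl_general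
    {I : Type*} [PartialOrder I] (L : DistribAlmostLattice I)
    (X : I → Type*) [∀ i, TopologicalSpace (X i)]
    [∀ i, Nonempty (X i)] [∀ i, CompactSpace (X i)] [∀ i, T2Space (X i)]
    (p : ∀ i j : I, i ≤ j → X j → X i)
    (hcont : ∀ i j : I, ∀ hij : i ≤ j, Continuous (p i j hij))
    (hsurj : ∀ i j : I, ∀ hij : i ≤ j, Function.Surjective (p i j hij))
    (hid : ∀ i : I, ∀ hii : i ≤ i, ∀ x : X i, p i i hii x = x)
    (hcomp : ∀ i j k : I, ∀ hij : i ≤ j, ∀ hjk : j ≤ k, ∀ x : X k,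
      p i j hij (p j k hjk x) = p i k (hij.trans hjk) x)
    (hcor : ∀ i j : I, ∀ hub : ∃ u, i ≤ u ∧ j ≤ u, ∀ xi : X i, ∀ xj : X j,
      p (L.meet i j) i (L.meet_le_left i j) xi =
        p (L.meet i j) j (L.meet_le_right i j) xj →
      ∃ z : X (L.join i j),
        p i (L.join i j) (L.le_join_left i j hub) z = xi ∧
        p j (L.join i j) (L.le_join_right i j hub) z = xj) :
    (∀ F : Set I, IsClosedSubset L F → ∀ y : ∀ i, X i, InY X p F y →
      ∃ x : ∀ i, X i, InXl X p x ∧ ∀ j ∈ F, x j = y j) ∧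
    (∀ i : I, ∀ xi : X i, ∃ x : ∀ i, X i, InXl X p x ∧ x i = xi) ∧
    (∀ i : I, Function.Surjective
      (fun x : {x : ∀ i, X i // InXl X p x} => x.1 i)) ∧
    Nonempty {x : ∀ i, X i // InXl X p x} := by
  classical
  have hext (F : Set I) (hF : IsClosedSubset L F) (y : ∀ i, X i) (hy : InY X p F y) :=
    exists_inXl_extending L hcont hid hcomp hsurj hcor hF hy
  have hpoint (i : I) (xi : X i) : ∃ x : ∀ i, X i, InXl X p x ∧ x i = xi := by
    let y := Function.update (fun j => Classical.arbitrary (X j)) i xi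
    have hy : InY X p {i} y := by
      intro k hk j hj h
      rw [Set.mem_singleton_iff] at hk hj
      subst hk hj
      exact hid _ h _
    obtain ⟨x, hx, hxi⟩ := hext {i} (L.isClosedSubset_singleton i) y hy
    exact ⟨x, hx, (hxi i rfl).trans (Function.update_self ..)⟩
  refine ⟨hext, hpoint, fun i xi => ?_, ?_⟩
  · obtain ⟨x, hx, hxi⟩ := hpoint i xi
    exact ⟨⟨x, hx⟩, hxi⟩
  · obtain ⟨x, hx, -⟩ := hext ∅ (by simp [IsClosedSubset]) (fun j => Classical.arbitrary _)
      (by simp [InY])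
    exact ⟨⟨x, hx⟩⟩

/-- Any thread over a closed `F ⊆ I` extends to an element of `X_ℓ`; in particular all
projections `p^ℓ_i : X_ℓ → X_i` are surjective and `X_ℓ` is nonempty. -/
theorem thread_extends_to_Xl
    {I : Type*} [PartialOrder I] (L : DistribAlmostLattice I)
    (X : I → Type*) [∀ i, TopologicalSpace (X i)]
    [∀ i, Nonempty (X i)] [∀ i, CompactSpace (X i)] [∀ i, T2Space (X i)]
    (p : ∀ i j : I, i ≤ j → X j → X i)
    (hcont : ∀ i j : I, ∀ hij : i ≤ j, Continuous (p i j hij))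
    (hopen : ∀ i j : I, ∀ hij : i ≤ j, IsOpenMap (p i j hij))
    (hsurj : ∀ i j : I, ∀ hij : i ≤ j, Function.Surjective (p i j hij))
    (hid : ∀ i : I, ∀ hii : i ≤ i, ∀ x : X i, p i i hii x = x)
    (hcomp : ∀ i j k : I, ∀ hij : i ≤ j, ∀ hjk : j ≤ k, ∀ x : X k,
      p i j hij (p j k hjk x) = p i k (hij.trans hjk) x)
    (hcor : ∀ i j : I, ∀ hub : ∃ u, i ≤ u ∧ j ≤ u, ∀ xi : X i, ∀ xj : X j,
      p (L.meet i j) i (L.meet_le_left i j) xi =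
        p (L.meet i j) j (L.meet_le_right i j) xj →
      ∃ z : X (L.join i j),
        p i (L.join i j) (L.le_join_left i j hub) z = xi ∧
        p j (L.join i j) (L.le_join_right i j hub) z = xj) :
    (∀ F : Set I, IsClosedSubset L F → ∀ y : ∀ i, X i, InY X p F y →
      ∃ x : ∀ i, X i, InXl X p x ∧ ∀ j ∈ F, x j = y j) ∧
    (∀ i : I, ∀ xi : X i, ∃ x : ∀ i, X i, InXl X p x ∧ x i = xi) ∧
    (∀ i : I, Function.Surjective
      (fun x : {x : ∀ i, X i // InXl X p x} => x.1 i)) ∧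
    Nonempty {x : ∀ i, X i // InXl X p x} :=
  thread_extends_to_Xl_general L X p hcont hsurj hid hcomp hcor
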